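/- (Region C₊ of the atomic-limit phase diagram) Let r = 2. Assume W > 0, I > 0, and max(I, zW/2 − I) < μ < zW/2 + I. Then H(C) = H_i^0(C) − μ·N_i(C) attains its minimum over all ion configurations exactly at the configurations for which there is a sublattice (Λᵉ or Λᵒ) with n_x = 2 at each of its sites while n_x = 1 (either species) at each site of the complementary sublattice; the number of such minimizing configurations equals 2^{|Λᵉ|} + 2^{|Λᵒ|}. -/

import Mathlib

/-!
With `m_x = n_x - 1 ∈ {-1, 0, 1}` the on-site part of `H` is, up to a constant,
`∑_x (I m_x² - μ m_x)`. Since `G` is `z`-regular, each on-site term can be shared equally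
among the `z` bonds at `x`, which writes `H` as `-3μ|Λ|/2` plus a sum over bonds of a quantity
depending only on `(m_x, m_y)`. For `max(I, zW/2 - I) < μ < zW/2 + I` this bond quantity is
nonnegative and vanishes exactly when `{n_x, n_y} = {1, 2}`. On a connected bipartite graph
the configurations in which every bond joins a doubly to a singly occupied site are exactly the
two sublattice patterns, and each leaves a free choice of species on every singly occupied site.
-/

open Finset

/-- Occupation number (0 or 1) attached to a Boolean occupancy variable. -/
noncomputable def occ (b : Bool) : ℝ := if b then 1 else 0

/-- Total number of ions at site `x` (as a real number): `n_x = Σ_σ n_{x,σ}`. -/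
noncomputable def nsite {V : Type*} {r : ℕ} (C : V → Fin r → Bool) (x : V) : ℝ :=
  ∑ σ : Fin r, occ (C x σ)

/-- Total number of ions at site `x` (as a natural number). -/
def nnat {V : Type*} {r : ℕ} (C : V → Fin r → Bool) (x : V) : ℕ :=
  ∑ σ : Fin r, (if C x σ then 1 else 0)

/-- The classical Hamiltonian
`H_i^0(C) = 2I Σ_x Σ_{σ'<σ''} (n_{x,σ'} - 1/2)(n_{x,σ''} - 1/2)
          + (W/2) Σ_{⟨x,y⟩} (n_x - r/2)(n_y - r/2)`,
where the sum over edges `⟨x,y⟩` (each edge counted once) is written as half the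
symmetric double sum over ordered adjacent pairs. -/
noncomputable def H0 {V : Type*} [Fintype V] (G : SimpleGraph V) [DecidableRel G.Adj]
    (r : ℕ) (I W : ℝ) (C : V → Fin r → Bool) : ℝ :=
  2 * I * ∑ x : V, ∑ p ∈ Finset.univ.filter (fun p : Fin r × Fin r => p.1 < p.2),
      (occ (C x p.1) - 1 / 2) * (occ (C x p.2) - 1 / 2)
  + W / 2 * ((∑ x : V, ∑ y : V,
      (if G.Adj x y then (nsite C x - r / 2) * (nsite C y - r / 2) else 0)) / 2)

/-- Total ion number `N_i(C) = Σ_{x,σ} n_{x,σ}` (as a real number). -/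
noncomputable def Ni {V : Type*} {r : ℕ} [Fintype V] (C : V → Fin r → Bool) : ℝ :=
  ∑ x : V, ∑ σ : Fin r, occ (C x σ)

/-- Grand-canonical classical Hamiltonian `H(C) = H_i^0(C) − μ·N_i(C)` for two species. -/
noncomputable def Hgc {V : Type*} [Fintype V] (G : SimpleGraph V) [DecidableRel G.Adj]
    (I W μ : ℝ) (C : V → Fin 2 → Bool) : ℝ :=
  H0 G 2 I W C - μ * Ni C

open SimpleGraph

lemma nsite_eq_nnat {V : Type*} {r : ℕ} (C : V → Fin r → Bool) (x : V) :
    nsite C x = nnat C x := by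
  simp only [nsite, nnat, occ]
  push_cast
  rfl

lemma nnat_le_two {V : Type*} (C : V → Fin 2 → Bool) (x : V) : nnat C x ≤ 2 := by
  simp only [nnat, Fin.sum_univ_two]
  split_ifs <;> simp

lemma card_fin_two_bool_sum_eq_choose (n : ℕ) :
    Nat.card {s : Fin 2 → Bool // ∑ σ, (if s σ then 1 else 0) = n} = Nat.choose 2 n := by
  rw [Nat.card_eq_fintype_card]
  rcases n with _ | _ | _ | n
  · decide
  · decide
  · decide
  · rw [Nat.choose_eq_zero_of_lt (by omega), Fintype.card_eq_zero_iff]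
    refine ⟨fun ⟨s, hs⟩ => ?_⟩
    simp only [Fin.sum_univ_two] at hs
    split_ifs at hs <;> omega

noncomputable def siteEnergy (I μ : ℝ) (k : ℕ) : ℝ := I * ((k : ℝ) - 1) ^ 2 - μ * ((k : ℝ) - 1)

lemma Hgc_eq_site_add_bond {V : Type*} [Fintype V] (G : SimpleGraph V) [DecidableRel G.Adj]
    (I W μ : ℝ) (C : V → Fin 2 → Bool) :
    Hgc G I W μ C = ∑ x, (siteEnergy I μ (nnat C x) - I / 2 - μ)
      + W / 4 * ∑ x, ∑ y, if G.Adj x y then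
          ((nnat C x : ℝ) - 1) * ((nnat C y : ℝ) - 1) else 0 := by
  have hpairs : univ.filter (fun p : Fin 2 × Fin 2 => p.1 < p.2) = {(0, 1)} := by decide
  have honsite : ∀ x, 2 * I * ((occ (C x 0) - 1 / 2) * (occ (C x 1) - 1 / 2))
      - μ * (occ (C x 0) + occ (C x 1)) = siteEnergy I μ (nnat C x) - I / 2 - μ := by
    intro x
    rcases h0 : C x 0 <;> rcases h1 : C x 1 <;>
      simp only [siteEnergy, nnat, occ, Fin.sum_univ_two, h0, h1] <;> norm_num <;> ring
  have hhalf : ((2 : ℕ) : ℝ) / 2 = 1 := by norm_num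
  simp only [Hgc, H0, Ni, hpairs, sum_singleton, Fin.sum_univ_two, ← honsite, nsite_eq_nnat,
    hhalf]
  rw [mul_sum, mul_sum, sum_sub_distrib]
  ring

namespace SimpleGraph

variable {V : Type*} [Fintype V] {G : SimpleGraph V} [DecidableRel G.Adj] {z : ℕ}

lemma IsRegularOfDegree.sum_sum_adj_left (hreg : G.IsRegularOfDegree z) (g : V → ℝ) :
    ∑ x, ∑ y, (if G.Adj x y then g x else 0) = z * ∑ x, g x := by
  rw [mul_sum]
  refine sum_congr rfl fun x _ => ?_
  rw [← sum_filter, sum_const, ← neighborFinset_eq_filter, card_neighborFinset_eq_degree,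
    hreg x, nsmul_eq_mul]

lemma IsRegularOfDegree.sum_sum_adj_add (hreg : G.IsRegularOfDegree z) (g : V → ℝ) :
    ∑ x, ∑ y, (if G.Adj x y then g x + g y else 0) = 2 * z * ∑ x, g x := by
  have hswap : ∑ x, ∑ y, (if G.Adj x y then g y else 0)
      = ∑ x, ∑ y, (if G.Adj x y then g x else 0) := by
    rw [sum_comm]
    simp only [G.adj_comm]
  simp only [ite_add_zero, sum_add_distrib, hswap, hreg.sum_sum_adj_left]
  ring

end SimpleGraph

/-- `2z` times the energy of a bond `⟨x, y⟩` above `(I - μ) / (2z)`, once each site has passed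
`1/z` of its on-site energy to each of its bonds. -/
noncomputable def bondExcess (z : ℕ) (I W μ : ℝ) (k l : ℕ) : ℝ :=
  siteEnergy I μ k + siteEnergy I μ l - (I - μ) + z * W / 2 * (((k : ℝ) - 1) * ((l : ℝ) - 1))

lemma Hgc_eq_ground_add_bondExcess {V : Type*} [Fintype V] {G : SimpleGraph V}
    [DecidableRel G.Adj] {z : ℕ} (hz : z ≠ 0) (hreg : G.IsRegularOfDegree z) (I W μ : ℝ)
    (C : V → Fin 2 → Bool) :
    Hgc G I W μ C = -(3 / 2 * μ * Fintype.card V) + (∑ x, ∑ y, if G.Adj x y then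
        bondExcess z I W μ (nnat C x) (nnat C y) else 0) / (2 * z) := by
  have hsplit : (∑ x, ∑ y, if G.Adj x y then bondExcess z I W μ (nnat C x) (nnat C y) else 0)
      = (∑ x, ∑ y, if G.Adj x y then
          siteEnergy I μ (nnat C x) + siteEnergy I μ (nnat C y) else 0)
        - (∑ x, ∑ y, if G.Adj x y then I - μ else 0)
        + z * W / 2 * ∑ x, ∑ y, if G.Adj x y then
          ((nnat C x : ℝ) - 1) * ((nnat C y : ℝ) - 1) else 0 := by
    simp only [mul_sum, ← sum_sub_distrib, ← sum_add_distrib]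
    refine sum_congr rfl fun x _ => sum_congr rfl fun y _ => ?_
    split_ifs
    · rfl
    · simp
  rw [Hgc_eq_site_add_bond, hsplit, hreg.sum_sum_adj_add, hreg.sum_sum_adj_left (fun _ => I - μ)]
  simp only [sum_sub_distrib, sum_const, card_univ, nsmul_eq_mul]
  field_simp
  ring

section BondExcess

variable {z : ℕ} {I W μ : ℝ} {k l : ℕ}

lemma bondExcess_nonneg (hμI : I < μ) (hμW : z * W / 2 - I < μ) (hμ : μ < z * W / 2 + I)
    (hk : k ≤ 2) (hl : l ≤ 2) : 0 ≤ bondExcess z I W μ k l := by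
  interval_cases k <;> interval_cases l <;> norm_num [bondExcess, siteEnergy] <;> linarith

lemma bondExcess_eq_zero_iff (hμI : I < μ) (hμW : z * W / 2 - I < μ)
    (hμ : μ < z * W / 2 + I) (hk : k ≤ 2) (hl : l ≤ 2) :
    bondExcess z I W μ k l = 0 ↔ (k = 2 ∧ l = 1) ∨ (k = 1 ∧ l = 2) := by
  interval_cases k <;> interval_cases l <;> norm_num [bondExcess, siteEnergy] <;>
    intro h <;> linarith

end BondExcess

def IsCheckerboard {V : Type*} (G : SimpleGraph V) (C : V → Fin 2 → Bool) : Prop :=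
  ∀ x y, G.Adj x y → (nnat C x = 2 ∧ nnat C y = 1) ∨ (nnat C x = 1 ∧ nnat C y = 2)

section GroundState

variable {V : Type*} [Fintype V] {G : SimpleGraph V} [DecidableRel G.Adj] {z : ℕ}
  {I W μ : ℝ} (hz : z ≠ 0) (hreg : G.IsRegularOfDegree z) (hμI : I < μ)
  (hμW : z * W / 2 - I < μ) (hμ : μ < z * W / 2 + I)
include hz hreg hμI hμW hμ

lemma ground_le_Hgc (C : V → Fin 2 → Bool) :
    -(3 / 2 * μ * Fintype.card V) ≤ Hgc G I W μ C := by
  rw [Hgc_eq_ground_add_bondExcess hz hreg]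
  refine le_add_of_nonneg_right (div_nonneg (sum_nonneg fun x _ => sum_nonneg fun y _ =>
    ite_nonneg (bondExcess_nonneg hμI hμW hμ (nnat_le_two C x) (nnat_le_two C y)) le_rfl)
    (by positivity))

lemma Hgc_eq_ground_iff (C : V → Fin 2 → Bool) :
    Hgc G I W μ C = -(3 / 2 * μ * Fintype.card V) ↔ IsCheckerboard G C := by
  have hterm : ∀ x y, 0 ≤ if G.Adj x y then bondExcess z I W μ (nnat C x) (nnat C y) else 0 :=
    fun x y => ite_nonneg (bondExcess_nonneg hμI hμW hμ (nnat_le_two C x) (nnat_le_two C y)) le_rfl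
  have hbond : ∀ x y, bondExcess z I W μ (nnat C x) (nnat C y) = 0 ↔
      (nnat C x = 2 ∧ nnat C y = 1) ∨ (nnat C x = 1 ∧ nnat C y = 2) := fun x y =>
    bondExcess_eq_zero_iff hμI hμW hμ (nnat_le_two C x) (nnat_le_two C y)
  rw [Hgc_eq_ground_add_bondExcess hz hreg, add_eq_left, div_eq_zero_iff,
    or_iff_left (by positivity),
    sum_eq_zero_iff_of_nonneg fun x _ => sum_nonneg fun y _ => hterm x y]
  simp only [sum_eq_zero_iff_of_nonneg fun y _ => hterm _ y, mem_univ, true_implies,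
    ite_eq_right_iff, hbond]
  rfl

end GroundState

lemma SimpleGraph.Preconnected.forall_iff_or_forall_iff_not {V : Type*} {G : SimpleGraph V}
    (hG : G.Preconnected) {P Q : V → Prop} (hP : ∀ x y, G.Adj x y → (P x ↔ ¬P y))
    (hQ : ∀ x y, G.Adj x y → (Q x ↔ ¬Q y)) :
    (∀ x, P x ↔ Q x) ∨ (∀ x, P x ↔ ¬Q x) := by
  have hconst : ∀ x y, G.Reachable x y → ((P x ↔ Q x) ↔ (P y ↔ Q y)) := by
    rintro x y ⟨w⟩
    induction w with
    | nil => rfl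
    | cons h _ ih => rw [← ih, hP _ _ h, hQ _ _ h]; tauto
  by_cases h : ∃ x, (P x ↔ Q x)
  · obtain ⟨x, hx⟩ := h
    exact .inl fun y => (hconst x y (hG x y)).mp hx
  · exact .inr fun y => by by_contra hy; exact h ⟨y, by tauto⟩

lemma isCheckerboard_iff {V : Type*} {G : SimpleGraph V} (hG : G.Preconnected)
    (hnbr : ∀ x, ∃ y, G.Adj x y) {A B : Finset V} (hdisj : Disjoint A B)
    (hbip : ∀ x y, G.Adj x y → (x ∈ A ∧ y ∈ B) ∨ (x ∈ B ∧ y ∈ A)) (C : V → Fin 2 → Bool) :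
    IsCheckerboard G C ↔
      ((∀ x ∈ A, nnat C x = 2) ∧ (∀ x ∈ B, nnat C x = 1)) ∨
      ((∀ x ∈ A, nnat C x = 1) ∧ (∀ x ∈ B, nnat C x = 2)) := by
  have hBA : ∀ x ∈ B, x ∉ A := fun x hx => disjoint_right.mp hdisj hx
  constructor
  · intro hC
    have hside : ∀ x y, G.Adj x y → (x ∈ A ↔ y ∉ A) := by
      intro x y hxy
      rcases hbip x y hxy with ⟨hx, hy⟩ | ⟨hx, hy⟩
      · exact iff_of_true hx (hBA y hy)
      · exact iff_of_false (hBA x hx) (not_not.mpr hy)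
    have hdouble : ∀ x y, G.Adj x y → (nnat C x = 2 ↔ nnat C y ≠ 2) := by
      intro x y hxy
      rcases hC x y hxy with ⟨hx, hy⟩ | ⟨hx, hy⟩ <;> simp [hx, hy]
    have honetwo : ∀ x, nnat C x = 1 ∨ nnat C x = 2 := by
      intro x
      obtain ⟨y, hxy⟩ := hnbr x
      rcases hC x y hxy with ⟨hx, _⟩ | ⟨hx, _⟩ <;> simp [hx]
    rcases hG.forall_iff_or_forall_iff_not hside hdouble with h | h
    · exact .inl ⟨fun x hx => (h x).mp hx,
        fun x hx => (honetwo x).resolve_right fun h2 => hBA x hx ((h x).mpr h2)⟩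
    · exact .inr ⟨fun x hx => (honetwo x).resolve_right ((h x).mp hx),
        fun x hx => by by_contra h2; exact hBA x hx ((h x).mpr h2)⟩
  · rintro (⟨hA, hB⟩ | ⟨hA, hB⟩) x y hxy <;> rcases hbip x y hxy with ⟨hx, hy⟩ | ⟨hx, hy⟩
    · exact .inl ⟨hA x hx, hB y hy⟩
    · exact .inr ⟨hB x hx, hA y hy⟩
    · exact .inr ⟨hA x hx, hB y hy⟩
    · exact .inl ⟨hB x hx, hA y hy⟩

lemma card_setOf_forall_nnat_eq {V : Type*} [Fintype V] (k : V → ℕ) :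
    Nat.card {C : V → Fin 2 → Bool | ∀ x, nnat C x = k x} = ∏ x, Nat.choose 2 (k x) := by
  refine (Nat.card_congr (Equiv.subtypePiEquivPi
    (p := fun x (s : Fin 2 → Bool) => ∑ σ, (if s σ then 1 else 0) = k x))).trans ?_
  rw [Nat.card_pi]
  exact prod_congr rfl fun x _ => card_fin_two_bool_sum_eq_choose (k x)

lemma card_setOf_sublattice {V : Type*} [Fintype V] {A B : Finset V}
    (hcover : ∀ x, x ∈ A ∨ x ∈ B) (hdisj : Disjoint A B) :
    Nat.card {C : V → Fin 2 → Bool | (∀ x ∈ A, nnat C x = 2) ∧ (∀ x ∈ B, nnat C x = 1)} =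
      2 ^ B.card := by
  classical
  have hset : {C : V → Fin 2 → Bool | (∀ x ∈ A, nnat C x = 2) ∧ (∀ x ∈ B, nnat C x = 1)} =
      {C | ∀ x, nnat C x = if x ∈ B then 1 else 2} := by
    ext C
    simp only [Set.mem_ofPred_eq]
    constructor
    · rintro ⟨hA, hB⟩ x
      split_ifs with hx
      · exact hB x hx
      · exact hA x ((hcover x).resolve_right hx)
    · intro h
      refine ⟨fun x hx => ?_, fun x hx => ?_⟩ <;> rw [h x]
      · simp [disjoint_left.mp hdisj hx]
      · simp [hx]
  rw [hset, card_setOf_forall_nnat_eq]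
  simp only [apply_ite (Nat.choose 2), Nat.choose_self, Nat.choose_one_right]
  rw [prod_ite_mem, univ_inter, prod_const]

lemma card_setOf_sublattice_or {V : Type*} [Fintype V] [Nonempty V] {A B : Finset V}
    (hcover : ∀ x, x ∈ A ∨ x ∈ B) (hdisj : Disjoint A B) :
    Nat.card {C : V → Fin 2 → Bool |
        ((∀ x ∈ A, nnat C x = 2) ∧ (∀ x ∈ B, nnat C x = 1)) ∨
        ((∀ x ∈ A, nnat C x = 1) ∧ (∀ x ∈ B, nnat C x = 2))} = 2 ^ A.card + 2 ^ B.card := by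
  have hunion : {C : V → Fin 2 → Bool |
        ((∀ x ∈ A, nnat C x = 2) ∧ (∀ x ∈ B, nnat C x = 1)) ∨
        ((∀ x ∈ A, nnat C x = 1) ∧ (∀ x ∈ B, nnat C x = 2))} =
      {C | (∀ x ∈ A, nnat C x = 2) ∧ (∀ x ∈ B, nnat C x = 1)} ∪
      {C | (∀ x ∈ B, nnat C x = 2) ∧ (∀ x ∈ A, nnat C x = 1)} := by
    ext C
    simp only [Set.mem_ofPred_eq, Set.mem_union, and_comm (a := ∀ x ∈ A, nnat C x = 1)]
  have hdisj' : Disjoint {C : V → Fin 2 → Bool | (∀ x ∈ A, nnat C x = 2) ∧ (∀ x ∈ B, nnat C x = 1)}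
      {C | (∀ x ∈ B, nnat C x = 2) ∧ (∀ x ∈ A, nnat C x = 1)} := by
    refine Set.disjoint_left.mpr fun C ⟨hA2, hB1⟩ ⟨hB2, hA1⟩ => ?_
    obtain ⟨x⟩ := ‹Nonempty V›
    rcases hcover x with hx | hx
    · exact absurd (hA2 x hx) (by rw [hA1 x hx]; decide)
    · exact absurd (hB2 x hx) (by rw [hB1 x hx]; decide)
  rw [hunion, Nat.card_coe_set_eq, Set.ncard_union_eq hdisj', ← Nat.card_coe_set_eq,
    ← Nat.card_coe_set_eq, card_setOf_sublattice hcover hdisj,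
    card_setOf_sublattice (fun x => (hcover x).symm) hdisj.symm, add_comm]

lemma setOf_forall_le_eq_of_iff {α β : Type*} [PartialOrder β] {f : α → β} {m : β}
    {P : α → Prop} (hle : ∀ a, m ≤ f a) (heq : ∀ a, f a = m ↔ P a) (hP : ∃ a, P a) :
    {a | ∀ b, f a ≤ f b} = {a | P a} := by
  obtain ⟨a₀, ha₀⟩ := hP
  ext a
  refine ⟨fun ha => (heq a).mp (le_antisymm ((ha a₀).trans ((heq a₀).mpr ha₀).le) (hle a)),
    fun ha b => ((heq a).mpr ha).trans_le (hle b)⟩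

theorem statement17_general
    {V : Type*} [Fintype V]
    (G : SimpleGraph V) [DecidableRel G.Adj]
    (z : ℕ) (hz : 2 ≤ z)
    (hreg : G.IsRegularOfDegree z) (hconn : G.Connected)
    (Λe Λo : Finset V)
    (hcover : ∀ v : V, v ∈ Λe ∨ v ∈ Λo) (hdisj : Disjoint Λe Λo)
    (hbip : ∀ x y : V, G.Adj x y → (x ∈ Λe ∧ y ∈ Λo) ∨ (x ∈ Λo ∧ y ∈ Λe))
    (I W μ : ℝ)
    (hmu1 : max I ((z : ℝ) * W / 2 - I) < μ) (hmu2 : μ < (z : ℝ) * W / 2 + I) :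
    {C : V → Fin 2 → Bool | ∀ C' : V → Fin 2 → Bool, Hgc G I W μ C ≤ Hgc G I W μ C'} =
      {C : V → Fin 2 → Bool |
        ((∀ x ∈ Λe, nnat C x = 2) ∧ (∀ x ∈ Λo, nnat C x = 1)) ∨
        ((∀ x ∈ Λe, nnat C x = 1) ∧ (∀ x ∈ Λo, nnat C x = 2))} ∧
    Nat.card {C : V → Fin 2 → Bool |
        ∀ C' : V → Fin 2 → Bool, Hgc G I W μ C ≤ Hgc G I W μ C'} =
      2 ^ Λe.card + 2 ^ Λo.card := by
  have hz0 : z ≠ 0 := by omega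
  have hμI : I < μ := (le_max_left _ _).trans_lt hmu1
  have hμW : (z : ℝ) * W / 2 - I < μ := (le_max_right _ _).trans_lt hmu1
  have hnbr : ∀ x, ∃ y, G.Adj x y := fun x =>
    (G.degree_pos_iff_exists_adj x).mp (by rw [hreg x]; omega)
  have : Nonempty V := hconn.nonempty
  have hcard := card_setOf_sublattice_or (V := V) hcover hdisj
  obtain ⟨⟨C₀, hC₀⟩, -⟩ := Nat.card_pos_iff.mp
    (hcard.trans_gt (by positivity : 0 < 2 ^ Λe.card + 2 ^ Λo.card))
  have hmin := setOf_forall_le_eq_of_iff (ground_le_Hgc hz0 hreg hμI hμW hmu2)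
    (fun C => (Hgc_eq_ground_iff hz0 hreg hμI hμW hmu2 C).trans
      (isCheckerboard_iff hconn.preconnected hnbr hdisj hbip C)) ⟨C₀, hC₀⟩
  exact ⟨hmin, hmin ▸ hcard⟩

/-- **Region C₊.** For `W > 0`, `I > 0` and
`max(I, zW/2 − I) < μ < zW/2 + I`, the minimizers of `H(C) = H_i^0(C) − μ·N_i(C)` are
exactly the configurations with `n_x = 2` on one sublattice and `n_x = 1` (either
species) on the other; their number is `2^{|Λᵉ|} + 2^{|Λᵒ|}`. -/
theorem statement17
    {V : Type*} [Fintype V] [DecidableEq V]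
    (G : SimpleGraph V) [DecidableRel G.Adj]
    (z : ℕ) (hz : 2 ≤ z)
    (hreg : G.IsRegularOfDegree z) (hconn : G.Connected)
    (Λe Λo : Finset V)
    (hcover : ∀ v : V, v ∈ Λe ∨ v ∈ Λo) (hdisj : Disjoint Λe Λo)
    (hbip : ∀ x y : V, G.Adj x y → (x ∈ Λe ∧ y ∈ Λo) ∨ (x ∈ Λo ∧ y ∈ Λe))
    (I W μ : ℝ) (hW : 0 < W) (hI : 0 < I)
    (hmu1 : max I ((z : ℝ) * W / 2 - I) < μ) (hmu2 : μ < (z : ℝ) * W / 2 + I) :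
    {C : V → Fin 2 → Bool | ∀ C' : V → Fin 2 → Bool, Hgc G I W μ C ≤ Hgc G I W μ C'} =
      {C : V → Fin 2 → Bool |
        ((∀ x ∈ Λe, nnat C x = 2) ∧ (∀ x ∈ Λo, nnat C x = 1)) ∨
        ((∀ x ∈ Λe, nnat C x = 1) ∧ (∀ x ∈ Λo, nnat C x = 2))} ∧
    Nat.card {C : V → Fin 2 → Bool |
        ∀ C' : V → Fin 2 → Bool, Hgc G I W μ C ≤ Hgc G I W μ C'} =
      2 ^ Λe.card + 2 ^ Λo.card :=
  statement17_general G z hz hreg hconn Λe Λo hcover hdisj hbip I W μ hmu1 hmu2
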